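/- Let q be a polynomial vector field on ℝ³ (a triple of real polynomials in x₁, x₂, x₃). If the formal curl of the vector field x × q vanishes identically, i.e., ∇ × (x × q) = 0 as a polynomial identity, then x × q = 0 identically. In other words, the curl operator restricted to the space {x × q : q a polynomial vector field} is injective. -/

import Mathlib

open MvPolynomial

noncomputable section

/-- The pointwise cross product `x × q` of the identity vector field `x = (x₁,x₂,x₃)`
with a polynomial vector field `q`. -/
def crossX (q : Fin 3 → MvPolynomial (Fin 3) ℝ) : Fin 3 → MvPolynomial (Fin 3) ℝ :=
  ![X 1 * q 2 - X 2 * q 1, X 2 * q 0 - X 0 * q 2, X 0 * q 1 - X 1 * q 0]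

/-- The formal curl `∇ × v = (∂₂v₃ − ∂₃v₂, ∂₃v₁ − ∂₁v₃, ∂₁v₂ − ∂₂v₁)` of a polynomial
vector field on `ℝ³`. -/
def pcurl (v : Fin 3 → MvPolynomial (Fin 3) ℝ) : Fin 3 → MvPolynomial (Fin 3) ℝ :=
  ![pderiv 1 (v 2) - pderiv 2 (v 1),
    pderiv 2 (v 0) - pderiv 0 (v 2),
    pderiv 0 (v 1) - pderiv 1 (v 0)]

/-!
For any polynomial vector field `v`, `x × (∇ × v) = ∇(x · v) - (E + 1) v`, where
`E = ∑ⱼ xⱼ ∂ⱼ` is the Euler operator. For `v = x × q` we have `x · v = 0`, so `∇ × v = 0`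
forces `(E + 1) v = 0`. Since `E` multiplies the monomial `x^m` by its degree `|m|`,
`E + 1` is injective, hence `v = 0`.
-/

namespace MvPolynomial

variable {R σ : Type*} [CommSemiring R]

theorem coeff_X_mul_pderiv (i : σ) (p : MvPolynomial σ R) (m : σ →₀ ℕ) :
    coeff m (X i * pderiv i p) = m i • coeff m p := by
  classical
  induction p using MvPolynomial.induction_on' with
  | monomial u a =>
    rw [X_mul_pderiv_monomial, coeff_smul, coeff_monomial]
    split_ifs with hm
    · rw [hm]
    · rw [smul_zero, smul_zero]
  | add p r hp hr => rw [map_add, mul_add, coeff_add, hp, hr, coeff_add, smul_add]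

theorem coeff_sum_X_mul_pderiv [Fintype σ] (p : MvPolynomial σ R) (m : σ →₀ ℕ) :
    coeff m (∑ i, X i * pderiv i p) = m.degree • coeff m p := by
  simp only [coeff_sum, coeff_X_mul_pderiv, Finsupp.degree_eq_sum, Finset.sum_smul]

theorem eq_zero_of_sum_X_mul_pderiv_add_self_eq_zero [Fintype σ] [IsAddTorsionFree R]
    {p : MvPolynomial σ R} (h : ∑ i, X i * pderiv i p + p = 0) : p = 0 := by
  ext m
  have hm : (m.degree + 1) • coeff m p = 0 := by
    rw [add_smul, one_smul, ← coeff_sum_X_mul_pderiv, ← coeff_add, h, coeff_zero]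
  exact (nsmul_eq_zero_iff_right m.degree.succ_ne_zero).1 hm

end MvPolynomial

theorem sum_X_mul_crossX (q : Fin 3 → MvPolynomial (Fin 3) ℝ) :
    ∑ j, X j * crossX q j = 0 := by
  simp only [crossX, Fin.sum_univ_three, Matrix.cons_val_zero, Matrix.cons_val_one,
    Matrix.cons_val_two, Matrix.head_cons, Matrix.tail_cons]
  ring

theorem crossX_zero : crossX 0 = 0 := by
  funext i
  fin_cases i <;> simp [crossX]

theorem crossX_pcurl (v : Fin 3 → MvPolynomial (Fin 3) ℝ) (i : Fin 3) :
    crossX (pcurl v) i =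
      pderiv i (∑ j, X j * v j) - (∑ j, X j * pderiv j (v i) + v i) := by
  fin_cases i <;>
  simp [crossX, pcurl, Fin.sum_univ_three, pderiv_X] <;> ring

/-- If the formal curl of `x × q` vanishes identically for a polynomial
vector field `q` on `ℝ³`, then `x × q = 0` identically: the curl operator is injective on
the space `{x × q : q polynomial vector field}`. -/
theorem curl_injective_on_crossX (q : Fin 3 → MvPolynomial (Fin 3) ℝ)
    (h : pcurl (crossX q) = 0) : crossX q = 0 := by
  funext i
  apply eq_zero_of_sum_X_mul_pderiv_add_self_eq_zero
  have hcross := crossX_pcurl (crossX q) i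
  rwa [h, crossX_zero, sum_X_mul_crossX, map_zero, zero_sub, Pi.zero_apply, zero_eq_neg]
    at hcross

end
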